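/- (Lemma 2, cyclic rule: sufficient descent over one cycle.) Let X_i ⊆ ℝ^{m_i} be nonempty closed convex, X = ∏_{j=1}^n X_j, f : ℝ^N → ℝ continuously differentiable with ∇f Lipschitz with constant L_{∇f}, g_i convex, h = f + Σ_i g_i, and let f̃_i satisfy τ-strong convexity in the first argument and gradient consistency. Run the PSCA algorithm with constant step-size γ ∈ (0,1] with γ < τ/L_{∇f} and cyclic block selection over a partition {T_0,…,T_{m−1}} of {1,…,n}: at iteration t, with S^t = T_{t mod m}, set x̂_i^t = argmin_{u∈X_i} f̃_i(u,x^t)+g_i(u) and x_i^{t+1} = x_i^t + γ(x̂_i^t − x_i^t) for i ∈ S^t, x_i^{t+1} = x_i^t otherwise. Then for every r ≥ 0, h(x^{m(r+1)}) ≤ h(x^{mr}) − β̃ ‖x^{m(r+1)} − x^{mr}‖², where β̃ = (τ − γ L_{∇f})/(2γ) > 0. -/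

import Mathlib

/-!
A single PSCA step is already a sufficient-descent step. Strong convexity of the surrogate makes
`u ↦ f̃ᵢ(u, x) + gᵢ(u)` grow quadratically away from its minimiser `x̂ᵢ`; together with the
first-order inequality at `xᵢ` and gradient consistency this gives
`⟪∇ᵢ f(x), x̂ᵢ - xᵢ⟫ ≤ gᵢ(xᵢ) - gᵢ(x̂ᵢ) - τ ‖x̂ᵢ - xᵢ‖²`. Feeding it into the descent lemma for the
`L`-smooth `f` and into convexity of `gᵢ` along the step yields
`h(x^{t+1}) ≤ h(x^t) - β̃ ‖x^{t+1} - x^t‖²`. In a cycle every block moves in exactly one step,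
so the squared step lengths add up to `‖x^{m(r+1)} - x^{mr}‖²`, and summing over the cycle
finishes the proof.
-/

open scoped RealInnerProductSpace
open Filter Topology Finset

noncomputable section

/-- The product space `ℝ^N = ℝ^{m_1} × … × ℝ^{m_n}` with the Euclidean norm. -/
abbrev TS (n : ℕ) (m : Fin n → ℕ) := PiLp 2 fun j => EuclideanSpace ℝ (Fin (m j))

open Set

section Smooth

variable {E : Type*} [NormedAddCommGroup E] [InnerProductSpace ℝ E] [CompleteSpace E]

theorem le_add_inner_gradient_add_sq_of_lipschitz {f : E → ℝ} (hf : Differentiable ℝ f) {L : ℝ}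
    (hL : ∀ a b, ‖gradient f a - gradient f b‖ ≤ L * ‖a - b‖) (x y : E) :
    f y ≤ f x + ⟪gradient f x, y - x⟫ + L / 2 * ‖y - x‖ ^ 2 := by
  set v := y - x
  set φ : ℝ → ℝ := fun s => f (x + s • v) - s * ⟪gradient f x, v⟫ - L / 2 * s ^ 2 * ‖v‖ ^ 2
  have hderiv : ∀ s : ℝ,
      HasDerivAt φ (⟪gradient f (x + s • v) - gradient f x, v⟫ - L * s * ‖v‖ ^ 2) s := by
    intro s
    have hline : HasDerivAt (fun s : ℝ => x + s • v) v s := by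
      simpa using ((hasDerivAt_id s).smul_const v).const_add x
    have hcomp : HasDerivAt (fun s : ℝ => f (x + s • v)) ⟪gradient f (x + s • v), v⟫ s := by
      have h := (hf (x + s • v)).hasGradientAt.hasFDerivAt.comp_hasDerivAt s hline
      rwa [InnerProductSpace.toDual_apply_apply] at h
    refine ((hcomp.sub ((hasDerivAt_id' s).mul_const ⟪gradient f x, v⟫)).sub
      (((hasDerivAt_pow 2 s).const_mul (L / 2)).mul_const (‖v‖ ^ 2))).congr_deriv ?_
    rw [inner_sub_left]
    push_cast
    ring
  have hanti : AntitoneOn φ (Icc 0 1) := by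
    refine antitoneOn_of_hasDerivWithinAt_nonpos (convex_Icc 0 1)
      (fun s _ => (hderiv s).continuousAt.continuousWithinAt)
      (fun s _ => (hderiv s).hasDerivWithinAt) fun s hs => ?_
    rw [interior_Icc] at hs
    have hlip : ‖gradient f (x + s • v) - gradient f x‖ ≤ L * (s * ‖v‖) := by
      simpa [norm_smul, abs_of_pos hs.1] using hL (x + s • v) x
    nlinarith [real_inner_le_norm (gradient f (x + s • v) - gradient f x) v, norm_nonneg v]
  have h01 := hanti (left_mem_Icc.2 zero_le_one) (right_mem_Icc.2 zero_le_one) zero_le_one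
  simp only [φ, v, one_smul, zero_smul, add_zero, add_sub_cancel] at h01
  linarith

end Smooth

section StrongConvexity

variable {F : Type*} [NormedAddCommGroup F] [InnerProductSpace ℝ F] {s : Set F} {m : ℝ}
  {φ g : F → ℝ}

theorem strongConvexOn_of_le_add_inner (hs : Convex ℝ s) {p : F → F}
    (h : ∀ u ∈ s, ∀ u' ∈ s, φ u' + ⟪p u', u - u'⟫ + m / 2 * ‖u - u'‖ ^ 2 ≤ φ u) :
    StrongConvexOn s m φ := by
  refine ⟨hs, fun u hu v hv a b ha hb hab => ?_⟩
  obtain rfl : a = 1 - b := by linarith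
  set w := (1 - b) • u + b • v
  have hw : w ∈ s := hs hu hv ha hb hab
  have hu' : u - w = b • (u - v) := by
    simp only [w]; module
  have hv' : v - w = (b - 1) • (u - v) := by
    simp only [w]; module
  -- expand around `w` towards `u` and `v`; the weighted inner-product terms cancel
  have h1 := h u hu w hw
  have h2 := h v hv w hw
  rw [hu', real_inner_smul_right, norm_smul, mul_pow, Real.norm_eq_abs, sq_abs] at h1
  rw [hv', real_inner_smul_right, norm_smul, mul_pow, Real.norm_eq_abs, sq_abs] at h2
  simp only [smul_eq_mul]
  linear_combination mul_le_mul_of_nonneg_left h1 ha + mul_le_mul_of_nonneg_left h2 hb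

theorem StrongConvexOn.add_convexOn (hφ : StrongConvexOn s m φ) (hg : ConvexOn ℝ s g) :
    StrongConvexOn s m (φ + g) := by
  simpa [StrongConvexOn] using UniformConvexOn.add hφ hg.uniformConvexOn_zero

theorem StrongConvexOn.add_sq_le_of_isMinOn (hφ : StrongConvexOn s m φ) {a x : F} (ha : a ∈ s)
    (hmin : IsMinOn φ s a) (hx : x ∈ s) : φ a + m / 2 * ‖x - a‖ ^ 2 ≤ φ x := by
  -- comparing `a` with `(1 - t) a + t x` gives `φ a + (1 - t) m/2 ‖x - a‖² ≤ φ x`; let `t → 0⁺`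
  have hbound : ∀ t ∈ Ioo (0 : ℝ) 1, φ a + (1 - t) * (m / 2 * ‖x - a‖ ^ 2) ≤ φ x := by
    rintro t ⟨ht0, ht1⟩
    have hseg := hφ.2 ha hx (sub_nonneg.2 ht1.le) ht0.le (sub_add_cancel 1 t)
    have hle : φ a ≤ φ ((1 - t) • a + t • x) := hmin (hφ.1 ha hx (by linarith) ht0.le (by ring))
    rw [norm_sub_rev] at hseg
    simp only [smul_eq_mul] at hseg
    nlinarith
  have hlim : Tendsto (fun t : ℝ => φ a + (1 - t) * (m / 2 * ‖x - a‖ ^ 2)) (𝓝[>] 0)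
      (𝓝 (φ a + m / 2 * ‖x - a‖ ^ 2)) := by
    have : Continuous fun t : ℝ => φ a + (1 - t) * (m / 2 * ‖x - a‖ ^ 2) := by fun_prop
    simpa using (this.tendsto 0).mono_left nhdsWithin_le_nhds
  exact le_of_tendsto hlim (eventually_of_mem (Ioo_mem_nhdsGT one_pos) hbound)

theorem inner_le_of_isMinOn_add (hs : Convex ℝ s) {p : F → F}
    (h : ∀ u ∈ s, ∀ u' ∈ s, φ u' + ⟪p u', u - u'⟫ + m / 2 * ‖u - u'‖ ^ 2 ≤ φ u)
    (hg : ConvexOn ℝ s g) {x a : F} (hx : x ∈ s) (ha : a ∈ s)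
    (hmin : IsMinOn (fun u => φ u + g u) s a) :
    ⟪p x, a - x⟫ ≤ g x - g a - m * ‖a - x‖ ^ 2 := by
  have hgrowth := ((strongConvexOn_of_le_add_inner hs h).add_convexOn hg).add_sq_le_of_isMinOn
    ha hmin hx
  have hfirst := h a ha x hx
  rw [norm_sub_rev] at hgrowth
  simp only [Pi.add_apply] at hgrowth
  linarith

end StrongConvexity

theorem ConvexOn.map_add_smul_sub_le {F : Type*} [AddCommGroup F] [Module ℝ F] {s : Set F}
    {g : F → ℝ} (hg : ConvexOn ℝ s g) {x z : F} (hx : x ∈ s) (hz : z ∈ s) {t : ℝ} (ht0 : 0 ≤ t)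
    (ht1 : t ≤ 1) : g (x + t • (z - x)) ≤ g x + t * (g z - g x) := by
  have h := hg.2 hx hz (sub_nonneg.2 ht1) ht0 (sub_add_cancel 1 t)
  rw [show (1 - t) • x + t • z = x + t • (z - x) by module] at h
  simp only [smul_eq_mul] at h
  linarith

theorem le_sub_mul_sum_of_le_sub {u c : ℕ → ℝ} {β : ℝ} (h : ∀ k, u (k + 1) ≤ u k - β * c k)
    (K : ℕ) : u K ≤ u 0 - β * ∑ k ∈ range K, c k := by
  induction K with
  | zero => simp
  | succ K ih => rw [sum_range_succ]; linarith [h K]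

section Blocks

variable {ι : Type*} {E : ι → Type*}

theorem PiLp.apply_mem_of_block_update [DecidableEq ι] [∀ i, AddCommGroup (E i)]
    [∀ i, Module ℝ (E i)]
    {X : ∀ i, Set (E i)} (hX : ∀ i, Convex ℝ (X i)) {γ : ℝ} (hγ0 : 0 ≤ γ) (hγ1 : γ ≤ 1)
    {S : ℕ → Finset ι} {x z : ℕ → PiLp 2 E} (hx0 : ∀ i, x 0 i ∈ X i)
    (hz : ∀ t, ∀ i ∈ S t, z t i ∈ X i)
    (hx : ∀ t i, x (t + 1) i = if i ∈ S t then x t i + γ • (z t i - x t i) else x t i) :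
    ∀ t i, x t i ∈ X i := by
  intro t
  induction t with
  | zero => exact hx0
  | succ t ih =>
    intro i
    rw [hx t i]
    split_ifs with hi
    · exact (hX i).add_smul_sub_mem (ih i) (hz t i hi) ⟨hγ0, hγ1⟩
    · exact ih i

variable [Fintype ι] [∀ i, NormedAddCommGroup (E i)]

theorem PiLp.norm_sub_sq_eq_sum_of_single_change (w : ℕ → PiLp 2 E) (K : ℕ)
    (hw : ∀ i, ∃ a < K, ∀ k < K, k ≠ a → w (k + 1) i = w k i) :
    ‖w K - w 0‖ ^ 2 = ∑ k ∈ range K, ‖w (k + 1) - w k‖ ^ 2 := by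
  simp only [PiLp.norm_sq_eq_of_L2, PiLp.sub_apply]
  rw [sum_comm]
  refine sum_congr rfl fun i _ => ?_
  obtain ⟨a, haK, ha⟩ := hw i
  have hzero : ∀ k ∈ range K, k ≠ a → w (k + 1) i - w k i = 0 := fun k hk hka => by
    rw [ha k (mem_range.1 hk) hka, sub_self]
  have htel : w K i - w 0 i = w (a + 1) i - w a i := by
    rw [← sum_range_sub (fun k => w k i) K]
    exact sum_eq_single_of_mem a (mem_range.2 haK) hzero
  rw [htel, sum_eq_single_of_mem a (mem_range.2 haK) fun k hk hka => by
    rw [hzero k hk hka, norm_zero, sq, mul_zero]]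

variable [∀ i, InnerProductSpace ℝ (E i)]

theorem PiLp.inner_eq_sum_of_eq_zero_off (a w : PiLp 2 E) {S : Finset ι}
    (hw : ∀ i ∉ S, w i = 0) : ⟪a, w⟫ = ∑ i ∈ S, ⟪a i, w i⟫ := by
  rw [PiLp.inner_apply]
  exact (sum_subset (subset_univ S) fun i _ hi => by rw [hw i hi, inner_zero_right]).symm

theorem PiLp.norm_sq_eq_sum_of_eq_zero_off (w : PiLp 2 E) {S : Finset ι}
    (hw : ∀ i ∉ S, w i = 0) : ‖w‖ ^ 2 = ∑ i ∈ S, ‖w i‖ ^ 2 := by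
  rw [← real_inner_self_eq_norm_sq, PiLp.inner_eq_sum_of_eq_zero_off w w hw]
  simp only [real_inner_self_eq_norm_sq]

theorem add_sum_le_of_block_update [DecidableEq ι] [∀ i, CompleteSpace (E i)] {f : PiLp 2 E → ℝ}
    (hf : Differentiable ℝ f) {L : ℝ}
    (hL : ∀ a b, ‖gradient f a - gradient f b‖ ≤ L * ‖a - b‖)
    {g : ∀ i, E i → ℝ} (hg : ∀ i, ConvexOn ℝ univ (g i)) {τ γ : ℝ} (hτ : 0 ≤ τ)
    (hγ0 : 0 < γ) (hγ1 : γ ≤ 1) {S : Finset ι} {x z y : PiLp 2 E}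
    (hopt : ∀ i ∈ S, ⟪gradient f x i, z i - x i⟫ ≤ g i (x i) - g i (z i) - τ * ‖z i - x i‖ ^ 2)
    (hy : ∀ i, y i = if i ∈ S then x i + γ • (z i - x i) else x i) :
    f y + ∑ i, g i (y i) ≤ f x + ∑ i, g i (x i) - (τ - γ * L) / (2 * γ) * ‖y - x‖ ^ 2 := by
  have hoff : ∀ i ∉ S, (y - x) i = 0 := fun i hi => by simp [hy i, hi]
  have hon : ∀ i ∈ S, (y - x) i = γ • (z i - x i) := fun i hi => by simp [hy i, hi]
  set D := ∑ i ∈ S, ‖z i - x i‖ ^ 2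
  set B := ∑ i ∈ S, (g i (x i) - g i (z i))
  have hD : 0 ≤ D := sum_nonneg fun i _ => by positivity
  have hnorm : ‖y - x‖ ^ 2 = γ ^ 2 * D := by
    rw [PiLp.norm_sq_eq_sum_of_eq_zero_off _ hoff, mul_sum]
    refine sum_congr rfl fun i hi => ?_
    rw [hon i hi, norm_smul, mul_pow, Real.norm_eq_abs, sq_abs]
  have hinner : ⟪gradient f x, y - x⟫ ≤ γ * (B - τ * D) := by
    have hBD : B - τ * D = ∑ i ∈ S, (g i (x i) - g i (z i) - τ * ‖z i - x i‖ ^ 2) := by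
      simp only [B, D, mul_sum, sum_sub_distrib]
    rw [hBD, PiLp.inner_eq_sum_of_eq_zero_off _ _ hoff, mul_sum]
    refine sum_le_sum fun i hi => ?_
    rw [hon i hi, real_inner_smul_right]
    exact mul_le_mul_of_nonneg_left (hopt i hi) hγ0.le
  have hg_sum : ∑ i, g i (y i) ≤ ∑ i, g i (x i) - γ * B := calc
    ∑ i, g i (y i) ≤ ∑ i, (g i (x i) - γ * if i ∈ S then g i (x i) - g i (z i) else 0) := by
      refine sum_le_sum fun i _ => ?_
      rw [hy i]
      split_ifs
      · linarith [(hg i).map_add_smul_sub_le (mem_univ (x i)) (mem_univ (z i)) hγ0.le hγ1]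
      · simp
    _ = ∑ i, g i (x i) - γ * B := by rw [sum_sub_distrib, ← mul_sum, sum_ite_mem, Finset.univ_inter]
  have hf_desc := le_add_inner_gradient_add_sq_of_lipschitz hf hL x y
  rw [hnorm] at hf_desc ⊢
  have hβ : (τ - γ * L) / (2 * γ) * (γ ^ 2 * D) = γ * (τ - γ * L) / 2 * D := by
    field_simp
  linarith [mul_nonneg (mul_nonneg hγ0.le hτ) hD]

end Blocks

theorem stmt9_general
    {n : ℕ} {mblk : Fin n → ℕ}
    (X : ∀ j, Set (EuclideanSpace ℝ (Fin (mblk j))))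
    (hXcv : ∀ j, Convex ℝ (X j))
    (f : TS n mblk → ℝ) (hf : ContDiff ℝ 1 f)
    (Lf : ℝ)
    -- `∇f` is Lipschitz continuous with constant `L_{∇f}`
    (hfL : ∀ a b : TS n mblk, ‖gradient f a - gradient f b‖ ≤ Lf * ‖a - b‖)
    (g : ∀ j, EuclideanSpace ℝ (Fin (mblk j)) → ℝ) (hg : ∀ j, ConvexOn ℝ Set.univ (g j))
    (ft : ∀ j, EuclideanSpace ℝ (Fin (mblk j)) → TS n mblk → ℝ)
    (τ : ℝ) (hτ : 0 < τ)
    (hsc : ∀ i, ∀ y : TS n mblk, (∀ j, y j ∈ X j) → ∀ u ∈ X i, ∀ u' ∈ X i,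
      ft i u y ≥ ft i u' y + ⟪gradient (fun v => ft i v y) u', u - u'⟫ + τ / 2 * ‖u - u'‖ ^ 2)
    -- gradient consistency: `∇_{x_i} f̃_i(x_i, x) = ∇_{x_i} f(x)` for all `x ∈ X`
    (hgc : ∀ i, ∀ x : TS n mblk, (∀ j, x j ∈ X j) →
      gradient (fun u => ft i u x) (x i) = gradient f x i)
    -- the partition `{T_0, …, T_{M−1}}` of `{1, …, n}`
    (M : ℕ) (hM : 0 < M) (T : Fin M → Finset (Fin n))
    (hTdisj : ∀ a b, a ≠ b → Disjoint (T a) (T b))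
    (hTcover : ∀ i : Fin n, ∃ a, i ∈ T a)
    -- constant step-size `γ ∈ (0,1]` with `γ L_{∇f} < τ` (i.e. `γ < τ / L_{∇f}`)
    (γ : ℝ) (hγ0 : 0 < γ) (hγ1 : γ ≤ 1)
    -- PSCA iterates with cyclic block selection `S^t = T_{t mod M}`
    (x : ℕ → TS n mblk) (hx0 : ∀ j, x 0 j ∈ X j)
    (xhat : ℕ → TS n mblk)
    (hxhat : ∀ t, ∀ i ∈ T ⟨t % M, Nat.mod_lt t hM⟩,
      xhat t i ∈ X i ∧ IsMinOn (fun u => ft i u (x t) + g i u) (X i) (xhat t i))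
    (hupd : ∀ t i, x (t + 1) i =
      if i ∈ T ⟨t % M, Nat.mod_lt t hM⟩ then x t i + γ • (xhat t i - x t i) else x t i) :
    ∀ r : ℕ,
      f (x (M * (r + 1))) + ∑ i, g i (x (M * (r + 1)) i) ≤
        f (x (M * r)) + ∑ i, g i (x (M * r) i) -
          (τ - γ * Lf) / (2 * γ) * ‖x (M * (r + 1)) - x (M * r)‖ ^ 2 := by
  have hfeas : ∀ t j, x t j ∈ X j := PiLp.apply_mem_of_block_update hXcv hγ0.le hγ1 hx0
    (fun t i hi => (hxhat t i hi).1) hupd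
  have hstep : ∀ t, f (x (t + 1)) + ∑ i, g i (x (t + 1) i) ≤
      f (x t) + ∑ i, g i (x t i) - (τ - γ * Lf) / (2 * γ) * ‖x (t + 1) - x t‖ ^ 2 := fun t =>
    add_sum_le_of_block_update (hf.differentiable one_ne_zero) hfL hg hτ.le hγ0 hγ1
      (fun i hi => by
        rw [← hgc i _ (hfeas t)]
        exact inner_le_of_isMinOn_add (φ := fun u => ft i u (x t)) (hXcv i) (hsc i _ (hfeas t))
          ((hg i).subset (subset_univ _) (hXcv i)) (hfeas t i) (hxhat t i hi).1 (hxhat t i hi).2)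
      (hupd t)
  intro r
  have hcycle : ∀ i, ∃ a < M, ∀ k < M, k ≠ a → x (M * r + (k + 1)) i = x (M * r + k) i := by
    intro i
    obtain ⟨a, ha⟩ := hTcover i
    refine ⟨a, a.isLt, fun k hk hka => ?_⟩
    have hblock : (⟨(M * r + k) % M, Nat.mod_lt _ hM⟩ : Fin M) = ⟨k, hk⟩ :=
      Fin.ext (by simp [Nat.mod_eq_of_lt hk])
    have hi : i ∉ T ⟨k, hk⟩ := fun hik =>
      hka (congrArg Fin.val (of_not_not fun hne => disjoint_left.1 (hTdisj _ _ hne) hik ha))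
    rw [← add_assoc, hupd, hblock, if_neg hi]
  have hnorm := PiLp.norm_sub_sq_eq_sum_of_single_change (fun k => x (M * r + k)) M hcycle
  have hdesc := le_sub_mul_sum_of_le_sub
    (u := fun k => f (x (M * r + k)) + ∑ i, g i (x (M * r + k) i)) (fun k => hstep (M * r + k)) M
  simp only [add_zero] at hnorm hdesc
  rwa [mul_add_one, hnorm]

/-- **Lemma 2, cyclic rule: sufficient descent over one cycle.** Running
PSCA with constant step-size `γ ∈ (0,1]`, `γ L_{∇f} < τ`, and cyclic block selection over
a partition `{T_0, …, T_{M−1}}`, for every `r ≥ 0`,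
`h(x^{M(r+1)}) ≤ h(x^{Mr}) − β̃ ‖x^{M(r+1)} − x^{Mr}‖²` with
`β̃ = (τ − γ L_{∇f})/(2γ) > 0`, where `h = f + Σ_i g_i`. -/
theorem stmt9
    {n : ℕ} {mblk : Fin n → ℕ}
    (X : ∀ j, Set (EuclideanSpace ℝ (Fin (mblk j))))
    (hXne : ∀ j, (X j).Nonempty) (hXcl : ∀ j, IsClosed (X j)) (hXcv : ∀ j, Convex ℝ (X j))
    (f : TS n mblk → ℝ) (hf : ContDiff ℝ 1 f)
    (Lf : ℝ)
    -- `∇f` is Lipschitz continuous with constant `L_{∇f}`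
    (hfL : ∀ a b : TS n mblk, ‖gradient f a - gradient f b‖ ≤ Lf * ‖a - b‖)
    (g : ∀ j, EuclideanSpace ℝ (Fin (mblk j)) → ℝ) (hg : ∀ j, ConvexOn ℝ Set.univ (g j))
    (ft : ∀ j, EuclideanSpace ℝ (Fin (mblk j)) → TS n mblk → ℝ)
    (τ : ℝ) (hτ : 0 < τ)
    -- `f̃_i(·, y)` is continuously differentiable and `τ`-strongly convex on `X_i`
    (hC1 : ∀ i, ∀ y : TS n mblk, (∀ j, y j ∈ X j) → ContDiff ℝ 1 fun u => ft i u y)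
    (hsc : ∀ i, ∀ y : TS n mblk, (∀ j, y j ∈ X j) → ∀ u ∈ X i, ∀ u' ∈ X i,
      ft i u y ≥ ft i u' y + ⟪gradient (fun v => ft i v y) u', u - u'⟫ + τ / 2 * ‖u - u'‖ ^ 2)
    -- gradient consistency: `∇_{x_i} f̃_i(x_i, x) = ∇_{x_i} f(x)` for all `x ∈ X`
    (hgc : ∀ i, ∀ x : TS n mblk, (∀ j, x j ∈ X j) →
      gradient (fun u => ft i u x) (x i) = gradient f x i)
    -- the partition `{T_0, …, T_{M−1}}` of `{1, …, n}`
    (M : ℕ) (hM : 0 < M) (T : Fin M → Finset (Fin n))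
    (hTdisj : ∀ a b, a ≠ b → Disjoint (T a) (T b))
    (hTcover : ∀ i : Fin n, ∃ a, i ∈ T a)
    -- constant step-size `γ ∈ (0,1]` with `γ L_{∇f} < τ` (i.e. `γ < τ / L_{∇f}`)
    (γ : ℝ) (hγ0 : 0 < γ) (hγ1 : γ ≤ 1) (hγτ : γ * Lf < τ)
    -- PSCA iterates with cyclic block selection `S^t = T_{t mod M}`
    (x : ℕ → TS n mblk) (hx0 : ∀ j, x 0 j ∈ X j)
    (xhat : ℕ → TS n mblk)
    (hxhat : ∀ t, ∀ i ∈ T ⟨t % M, Nat.mod_lt t hM⟩,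
      xhat t i ∈ X i ∧ IsMinOn (fun u => ft i u (x t) + g i u) (X i) (xhat t i))
    (hupd : ∀ t i, x (t + 1) i =
      if i ∈ T ⟨t % M, Nat.mod_lt t hM⟩ then x t i + γ • (xhat t i - x t i) else x t i) :
    ∀ r : ℕ,
      f (x (M * (r + 1))) + ∑ i, g i (x (M * (r + 1)) i) ≤
        f (x (M * r)) + ∑ i, g i (x (M * r) i) -
          (τ - γ * Lf) / (2 * γ) * ‖x (M * (r + 1)) - x (M * r)‖ ^ 2 :=
  stmt9_general X hXcv f hf Lf hfL g hg ft τ hτ hsc hgc M hM T hTdisj hTcover γ hγ0 hγ1 x hx0 xhat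
    hxhat hupd
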